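/- arXiv:2001.02309 — 5 statements merged into one kernel-verified Lean document; each statement's English description precedes it below -/
import Mathlib

section
/- If t and a are nonnegative integers with n = t + 2a + 2 and t ≥ ⌊n/2⌋, then any path from state 0 back to state 0 of length n in the schematic automaton M_{t,a} traverses the cycle (0,1,…,t,0) exactly once. -/
/-! Every step of M_{t,a} raises the state by at most one, except the reset edge (t,0), which
lowers it by t. Along a closed walk the total change is zero, so c resets force at least t·c
rising steps among the n − c others: (t + 1)·c ≤ n. The hypothesis ⌊n/2⌋ ≤ t gives
n < 2(t + 1), hence c ≤ 1; and c ≥ 1 because t > 0 makes (t,0) the only edge into 0, so the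
last step is a reset. -/

/-- The edge relation of the schematic automaton M_{t,a} on states {0, …, t+a}:
edges (i,i+1) for i < t+a, the self-loop (t+a,t+a), edges (i,i−1) for t+1 ≤ i ≤ t+a,
and the edge (t,0). -/
def MtaEdge (t a i j : ℕ) : Prop :=
  (i < t + a ∧ j = i + 1) ∨ (i = t + a ∧ j = t + a) ∨
  (t + 1 ≤ i ∧ i ≤ t + a ∧ j + 1 = i) ∨ (i = t ∧ j = 0)

open Finset

theorem Fin.sum_succ_sub_castSucc {G : Type*} [AddCommGroup G] :
    ∀ {n : ℕ} (f : Fin (n + 1) → G), ∑ i : Fin n, (f i.succ - f i.castSucc) = f (last n) - f 0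
  | 0, f => by simp
  | n + 1, f => by
    rw [Fin.sum_univ_castSucc]
    simp only [Fin.succ_castSucc]
    rw [Fin.sum_succ_sub_castSucc (fun i => f i.castSucc), Fin.castSucc_zero, Fin.succ_last]
    abel

theorem card_mul_succ_le_of_closed_walk {n t : ℕ} (p : Fin (n + 1) → ℤ)
    (hclosed : p (Fin.last n) = p 0) (hrise : ∀ i : Fin n, p i.succ ≤ p i.castSucc + 1)
    (S : Finset (Fin n)) (hdrop : ∀ i ∈ S, p i.succ + t ≤ p i.castSucc) :
    #S * (t + 1) ≤ n := by
  have hsum : ∑ i ∈ S, (p i.succ - p i.castSucc) + ∑ i ∈ Sᶜ, (p i.succ - p i.castSucc) = 0 := by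
    rw [sum_add_sum_compl, Fin.sum_succ_sub_castSucc, hclosed, sub_self]
  have hS : ∑ i ∈ S, (p i.succ - p i.castSucc) ≤ ∑ _i ∈ S, (-t : ℤ) :=
    sum_le_sum fun i hi => by linarith [hdrop i hi]
  have hSc : ∑ i ∈ Sᶜ, (p i.succ - p i.castSucc) ≤ ∑ _i ∈ Sᶜ, (1 : ℤ) :=
    sum_le_sum fun i _ => by linarith [hrise i]
  have hS_le : #S ≤ n := card_le_univ S |>.trans_eq (Fintype.card_fin n)
  simp only [sum_const, card_compl, Fintype.card_fin, nsmul_eq_mul, mul_neg, mul_one] at hS hSc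
  push_cast [hS_le] at hSc
  zify
  linarith

theorem MtaEdge.le_succ {t a i j : ℕ} (h : MtaEdge t a i j) : j ≤ i + 1 := by
  unfold MtaEdge at h; omega

theorem MtaEdge.eq_of_snd_eq_zero {t a i : ℕ} (ht : 0 < t) (h : MtaEdge t a i 0) : i = t := by
  unfold MtaEdge at h; omega

/-- If n = t + 2a + 2 and t ≥ ⌊n/2⌋, then any closed walk of length n from state 0 to
state 0 in M_{t,a} traverses the cycle (0,1,…,t,0), i.e., uses the edge (t,0),
exactly once. -/
theorem cycle_traversed_once (t a n : ℕ) (hn : n = t + 2 * a + 2) (ht : n / 2 ≤ t)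
    (p : Fin (n + 1) → ℕ) (h0 : p 0 = 0) (hlast : p (Fin.last n) = 0)
    (hedge : ∀ i : Fin n, MtaEdge t a (p i.castSucc) (p i.succ)) :
    (Finset.univ.filter (fun i : Fin n => p i.castSucc = t ∧ p i.succ = 0)).card = 1 := by
  set S := Finset.univ.filter (fun i : Fin n => p i.castSucc = t ∧ p i.succ = 0)
  obtain ⟨m, rfl⟩ : ∃ m, n = m + 1 := ⟨t + 2 * a + 1, hn⟩
  have hlast_mem : Fin.last m ∈ S := by
    have hstep := hedge (Fin.last m)
    rw [Fin.succ_last, hlast] at hstep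
    simpa [S, hlast] using hstep.eq_of_snd_eq_zero (by omega)
  have hbound : #S * (t + 1) ≤ m + 1 :=
    card_mul_succ_le_of_closed_walk (fun k => (p k : ℤ)) (by simp [h0, hlast])
      (fun i => by exact_mod_cast (hedge i).le_succ)
      S (fun i hi => by obtain ⟨-, hi_t, hi_0⟩ := mem_filter.mp hi; simp [hi_t, hi_0])
  have hS_pos : 0 < #S := card_pos.mpr ⟨_, hlast_mem⟩
  have hS_lt : #S < 2 := Nat.lt_of_mul_lt_mul_right (a := t + 1) (by omega)
  omega
end

section
/- Every binary word x of length n is uniquely accepted (among words of length n) by some NFA with at most ⌊n/2⌋ + 1 states; i.e., the nondeterministic automatic complexity satisfies A_N(x) ≤ ⌊n/2⌋ + 1. -/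
/-- `p` is an accepting path of length `n` for the word `w` in the NFA `M`. -/
def IsAcceptingPath {σ : Type*} (M : NFA Bool σ) (n : ℕ)
    (w : Fin n → Bool) (p : Fin (n + 1) → σ) : Prop :=
  p 0 ∈ M.start ∧ p (Fin.last n) ∈ M.accept ∧
    ∀ i : Fin n, p i.succ ∈ M.step (p i.castSucc) (w i)

/-!
With `m = ⌊n/2⌋`, the automaton is the path `0 → 1 → ⋯ → m`, a loop at `m`, and the way back
down to `0` (if `n` is odd) or `1` (if `n` is even), the `i`-th edge being labelled `x i`. The
intended path traverses every edge once, so an accepting word is determined by its path. A walk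
of length `n` from `0` to the end state must use the loop: otherwise state and time would keep
the same parity, and the end state has the wrong one. As states change by at most one per step,
the loop can only be taken at time `m`, which forces the walk to climb straight up before it and
to descend straight down after it.
-/

namespace Hyde

def pathNFA {σ : Type*} {n : ℕ} (p : Fin (n + 1) → σ) (x : Fin n → Bool) : NFA Bool σ where
  step q b := {q' | ∃ i : Fin n, x i = b ∧ p i.castSucc = q ∧ p i.succ = q'}
  start := {p 0}
  accept := {p (Fin.last n)}

section pathNFA

variable {σ : Type*} {n : ℕ} (p : Fin (n + 1) → σ) (x : Fin n → Bool)

theorem isAcceptingPath_pathNFA : IsAcceptingPath (pathNFA p x) n x p :=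
  ⟨rfl, rfl, fun i => ⟨i, rfl, rfl, rfl⟩⟩

theorem eq_of_isAcceptingPath_pathNFA
    (hp : ∀ i j : Fin n, p i.castSucc = p j.castSucc → p i.succ = p j.succ → i = j)
    {w : Fin n → Bool} (h : IsAcceptingPath (pathNFA p x) n w p) : w = x := by
  funext i
  obtain ⟨j, hxj, hcast, hsucc⟩ := h.2.2 i
  rw [← hxj, hp j i hcast hsucc]

end pathNFA

def UnitSteps (n : ℕ) (R : ℕ → ℕ) : Prop :=
  ∀ i < n, R (i + 1) ≤ R i + 1 ∧ R i ≤ R (i + 1) + 1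

namespace UnitSteps

variable {n : ℕ} {R : ℕ → ℕ}

theorem le_add_sub (hR : UnitSteps n R) {i j : ℕ} (hij : i ≤ j) (hjn : j ≤ n) :
    R j ≤ R i + (j - i) ∧ R i ≤ R j + (j - i) := by
  induction j, hij using Nat.le_induction with
  | base => simp
  | succ j hij ih =>
    have := hR j (by omega)
    have := ih (by omega)
    omega

theorem exists_succ_eq_of_odd (hR : UnitSteps n R) (hodd : (R 0 + R n + n) % 2 = 1) :
    ∃ t < n, R (t + 1) = R t := by
  by_contra! hne
  have parity : ∀ i ≤ n, (R 0 + R i + i) % 2 = 0 := by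
    intro i hi
    induction i with
    | zero => omega
    | succ i ih =>
      have := hR i (by omega)
      have := hne i (by omega)
      have := ih (by omega)
      omega
  have := parity n le_rfl
  omega

end UnitSteps

/-- The state visited at time `i`: the path `0, 1, …, m, m, m - 1, …` folded at `m = n / 2`. -/
def fold (n i : ℕ) : ℕ := min i (2 * (n / 2) + 1 - i)

theorem eq_fold_of_walk {n : ℕ} {R : ℕ → ℕ} (h0 : R 0 = 0) (hn : R n = fold n n)
    (hstep : ∀ i < n, ∃ j < n, R i = fold n j ∧ R (i + 1) = fold n (j + 1)) :
    ∀ i ≤ n, R i = fold n i := by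
  intro i hi
  rcases Nat.eq_zero_or_pos n with rfl | hpos
  · simp_all [Nat.le_zero.mp hi, fold]
  unfold fold at *
  have hR : UnitSteps n R := by
    intro i hi
    obtain ⟨j, -, h₁, h₂⟩ := hstep i hi
    omega
  have L := fun i j (hij : i ≤ j) (hjn : j ≤ n) => hR.le_add_sub hij hjn
  obtain ⟨t, ht, hstay⟩ := hR.exists_succ_eq_of_odd (by omega)
  have hloop : R t = n / 2 := by
    obtain ⟨j, hj, h₁, h₂⟩ := hstep t ht
    omega
  have htm : t = n / 2 := by
    have := L 0 t (by omega) (by omega)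
    have := L (t + 1) n (by omega) le_rfl
    omega
  subst htm
  have := L 0 i (by omega) hi
  have := L i n hi le_rfl
  rcases le_or_gt i (n / 2) with hlo | hhi
  · have := L i (n / 2) hlo (by omega)
    omega
  · have := L (n / 2 + 1) i hhi hi
    omega

theorem fold_lt (n : ℕ) (i : Fin (n + 1)) : fold n i < n / 2 + 1 := by
  unfold fold
  omega

def hydePath (n : ℕ) (i : Fin (n + 1)) : Fin (n / 2 + 1) := ⟨fold n i, fold_lt n i⟩

theorem hydePath_edge_injective {n : ℕ} (i j : Fin n)
    (hcast : hydePath n i.castSucc = hydePath n j.castSucc)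
    (hsucc : hydePath n i.succ = hydePath n j.succ) : i = j := by
  simp only [hydePath, fold, Fin.ext_iff, Fin.val_castSucc, Fin.val_succ] at hcast hsucc
  omega

theorem eq_hydePath_of_isAcceptingPath {n : ℕ} {x w : Fin n → Bool}
    {r : Fin (n + 1) → Fin (n / 2 + 1)} (h : IsAcceptingPath (pathNFA (hydePath n) x) n w r) :
    r = hydePath n := by
  obtain ⟨h0, hlast, hstep⟩ := h
  let R (k : ℕ) : ℕ := r (Fin.clamp k n)
  have hRr : ∀ i : Fin (n + 1), R i = r i := fun i => by
    simp [R, Fin.clamp, min_eq_left (Nat.le_of_lt_succ i.isLt)]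
  have hwalk := eq_fold_of_walk (n := n) (R := R) ?_ ?_ ?_
  · funext i
    exact Fin.ext ((hRr i).symm.trans (hwalk i (Nat.le_of_lt_succ i.isLt)))
  · simpa [hydePath, fold] using (hRr 0).trans (congrArg Fin.val h0)
  · exact (hRr (Fin.last n)).trans (congrArg Fin.val hlast)
  · intro i hi
    obtain ⟨j, -, hcast, hsucc⟩ := hstep ⟨i, hi⟩
    exact ⟨j, j.isLt, (hRr _).trans (congrArg Fin.val hcast.symm),
      (hRr _).trans (congrArg Fin.val hsucc.symm)⟩

end Hyde

/-- Hyde's theorem: every binary word of length n is uniquely accepted along a unique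
accepting path of length n by some NFA with ⌊n/2⌋ + 1 states, i.e., A_N(x) ≤ ⌊n/2⌋ + 1. -/
theorem hyde_bound (n : ℕ) (x : Fin n → Bool) :
    ∃ M : NFA Bool (Fin (n / 2 + 1)),
      (∃ p, IsAcceptingPath M n x p) ∧
      ∃! wp : (Fin n → Bool) × (Fin (n + 1) → Fin (n / 2 + 1)),
        IsAcceptingPath M n wp.1 wp.2 := by
  open Hyde in
  refine ⟨pathNFA (hydePath n) x, ⟨_, isAcceptingPath_pathNFA _ x⟩,
    ⟨(x, hydePath n), isAcceptingPath_pathNFA _ x, ?_⟩⟩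
  rintro ⟨w, r⟩ h
  obtain rfl := eq_hydePath_of_isAcceptingPath h
  exact Prod.ext (eq_of_isAcceptingPath_pathNFA _ x hydePath_edge_injective h) rfl
end

section
/- There exists an NFA with 4 states such that for every F ⊆ {0,1}³ one can choose transitions/acceptance data on the fixed 4-state schematic so that the accepted words of length 3 are exactly F; that is, the length-restricted nondeterministic state complexity of every subset of {0,1}³ is at most 4. -/
/-!
Besides an initial and an accepting state, one state per letter suffices for words of length
three. The first letter `a` leads to the state of `a`; reading `b` there, the automaton guesses
the last letter `c` and moves to the state of `c`, which is allowed exactly when `abc ∈ F`; the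
guess is then checked by letting the state of `c` accept on reading `c`. For the binary alphabet
this gives `1 + 2 + 1 = 4` states.
-/

namespace NFA

variable {α σ σ' : Type*}

def reindex (g : σ ≃ σ') (M : NFA α σ) : NFA α σ' where
  step s a := g '' M.step (g.symm s) a
  start := g '' M.start
  accept := g '' M.accept

theorem stepSet_reindex (g : σ ≃ σ') (M : NFA α σ) (S : Set σ) (a : α) :
    (M.reindex g).stepSet (g '' S) a = g '' M.stepSet S a := by
  simp only [stepSet, reindex, Set.biUnion_image, Equiv.symm_apply_apply, Set.image_iUnion₂]

theorem evalFrom_reindex (g : σ ≃ σ') (M : NFA α σ) (S : Set σ) (x : List α) :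
    (M.reindex g).evalFrom (g '' S) x = g '' M.evalFrom S x := by
  induction x generalizing S with
  | nil => rfl
  | cons a x ih => rw [evalFrom_cons, evalFrom_cons, stepSet_reindex, ih]

@[simp]
theorem accepts_reindex (g : σ ≃ σ') (M : NFA α σ) : (M.reindex g).accepts = M.accepts := by
  ext x
  rw [mem_accepts, mem_accepts, show (M.reindex g).start = g '' M.start from rfl,
    evalFrom_reindex]
  simp only [reindex, Set.exists_mem_image, g.injective.mem_set_image]

end NFA

section LengthThree

variable {α : Type*}

/-- `none` is the initial state, `some none` the accepting one, and `some (some s)` the state of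
the letter `s`. -/
def lengthThreeNFA (F : Set (List α)) : NFA α (Option (Option α)) where
  step
    | none, a => {some (some a)}
    | some (some s), b =>
        {q | (q = some none ∧ b = s) ∨ ∃ c, q = some (some c) ∧ [s, b, c] ∈ F}
    | some none, _ => ∅
  start := {none}
  accept := {some none}

theorem mem_lengthThreeNFA_accepts (F : Set (List α)) (a b c : α) :
    [a, b, c] ∈ (lengthThreeNFA F).accepts ↔ [a, b, c] ∈ F := by
  simp [NFA.mem_accepts, NFA.evalFrom_cons, NFA.mem_stepSet, lengthThreeNFA, or_and_right,
    exists_or]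

end LengthThree

theorem length_restricted_complexity_three_general (F : Set (List Bool)) :
    ∃ M : NFA Bool (Fin 4), ∀ x : List Bool, x.length = 3 → (x ∈ M.accepts ↔ x ∈ F) := by
  let e : Option (Option Bool) ≃ Fin 4 := Fintype.equivFinOfCardEq rfl
  refine ⟨(lengthThreeNFA F).reindex e, fun x hx => ?_⟩
  obtain ⟨a, b, c, rfl⟩ := List.length_eq_three.mp hx
  rw [NFA.accepts_reindex, mem_lengthThreeNFA_accepts]

/-- Every subset of {0,1}³ has length-restricted nondeterministic state complexity at most 4. -/
theorem length_restricted_complexity_three (F : Set (List Bool))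
    (hF : ∀ x ∈ F, x.length = 3) :
    ∃ M : NFA Bool (Fin 4), ∀ x : List Bool, x.length = 3 → (x ∈ M.accepts ↔ x ∈ F) :=
  length_restricted_complexity_three_general F
end

section
/- For every F ⊆ {0,1}^n, the length-restricted nondeterministic state complexity s'_N(F) is at most ∑_{i=0}^{k} a_i, where a_i = min(2^i, 2^(2^(n−i)) − 1) and k is the greatest index such that a_{k−1} < a_k. -/
/-!
Read the first `k` letters in a complete binary tree with one state per prefix of length `< k`
(`2^k - 1` states). On the `k`-th letter the automaton guesses a completion `w` of the prefix with
`prefix ++ w ∈ F` and loads `w` into a shift register with one state per word of length `n - k`: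
reading `c` in state `w` requires `w` to start with `c`, and moves to `w.tail` extended by an
arbitrary letter. All states accept, so a word of length `n` survives exactly when its suffix
equals a guessed completion.

Since `a_(k-1) < a_k`, the terms `a_i` with `i < k` are `2^i`; maximality of `k` forces
`n - k ≤ k`, whence `2^(n-k) ≤ a_k`, except when `k = 0`, where `n ≤ 1` and one state suffices.
-/

/-- The term a_i = min(2^i, 2^(2^(n−i)) − 1) of the Champarnaud–Pin sum. -/
def cpTerm (n i : ℕ) : ℕ := min (2 ^ i) (2 ^ (2 ^ (n - i)) - 1)

namespace NFA

variable {α σ τ : Type*}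

theorem evalFrom_nonempty_iff (M : NFA α σ) (S : Set σ) (x : List α) :
    (M.evalFrom S x).Nonempty ↔ ∃ s ∈ S, (M.evalFrom {s} x).Nonempty := by
  rw [evalFrom_eq_biUnion_singleton, Set.nonempty_biUnion]

def embed (M : NFA α σ) (f : σ ↪ τ) : NFA α τ where
  step t a := ⋃ s ∈ f ⁻¹' {t}, f '' M.step s a
  start := f '' M.start
  accept := f '' M.accept

theorem stepSet_embed (M : NFA α σ) (f : σ ↪ τ) (S : Set σ) (a : α) :
    (M.embed f).stepSet (f '' S) a = f '' M.stepSet S a := by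
  ext t
  simp [stepSet, embed, Set.image_iUnion₂]

theorem evalFrom_embed (M : NFA α σ) (f : σ ↪ τ) (S : Set σ) (x : List α) :
    (M.embed f).evalFrom (f '' S) x = f '' M.evalFrom S x := by
  induction x generalizing S with
  | nil => rfl
  | cons a x ih => simp only [evalFrom_cons, stepSet_embed, ih]

theorem accepts_embed (M : NFA α σ) (f : σ ↪ τ) : (M.embed f).accepts = M.accepts := by
  ext x
  rw [mem_accepts, mem_accepts, show (M.embed f).start = f '' M.start from rfl, evalFrom_embed]
  simp [embed]

theorem exists_fin_accepts_eq_of_card_le [Fintype σ] (M : NFA α σ) {N : ℕ}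
    (h : Fintype.card σ ≤ N) : ∃ M' : NFA α (Fin N), M'.accepts = M.accepts := by
  obtain ⟨f⟩ := Function.Embedding.nonempty_of_card_le (β := Fin N) (by simpa using h)
  exact ⟨M.embed f, M.accepts_embed f⟩

end NFA

theorem List.cons_prefix_iff_exists_dropLast {α : Type*} [Inhabited α] {c : α} {v w : List α}
    (hv : v.length < w.length) :
    c :: v <+: w ↔ ∃ w', w'.length = w.length ∧ w = c :: w'.dropLast ∧ v <+: w' := by
  constructor
  · rintro ⟨t, rfl⟩
    refine ⟨v ++ t ++ [default], by simp [Nat.add_assoc], by simp, ?_⟩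
    rw [List.append_assoc]
    exact List.prefix_append _ _
  · rintro ⟨w', -, rfl, hvw'⟩
    refine List.cons_prefix_cons.2 ⟨rfl, ?_⟩
    exact List.prefix_of_prefix_length_le hvw' (List.dropLast_prefix w')
      (Nat.lt_succ_iff.1 (by simpa using hv))

theorem cpTerm_zero (n : ℕ) : cpTerm n 0 = 1 := by
  have : 2 ≤ 2 ^ 2 ^ n := Nat.le_self_pow (by positivity) 2
  simp only [cpTerm, pow_zero, Nat.sub_zero]; omega

theorem cpTerm_eq_two_pow_of_lt_succ {n j : ℕ} (h : cpTerm n j < cpTerm n (j + 1)) :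
    cpTerm n j = 2 ^ j := by
  have : 2 ^ 2 ^ (n - (j + 1)) ≤ 2 ^ 2 ^ (n - j) := by gcongr <;> omega
  simp only [cpTerm] at h ⊢
  omega

theorem cpTerm_eq_two_pow_of_le {n i j : ℕ} (hij : i ≤ j) (h : cpTerm n j = 2 ^ j) :
    cpTerm n i = 2 ^ i := by
  have : 2 ^ i ≤ 2 ^ j := Nat.pow_le_pow_right two_pos hij
  have : 2 ^ 2 ^ (n - j) ≤ 2 ^ 2 ^ (n - i) := by gcongr <;> omega
  simp only [cpTerm] at h ⊢
  omega

theorem cpTerm_lt_cpTerm_succ {n k : ℕ} (h : k < n - k) (hn : 2 ≤ n - k) :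
    cpTerm n k < cpTerm n (k + 1) := by
  have h₁ : k + 1 ≤ 2 ^ (n - (k + 1)) :=
    (Nat.lt_two_pow_self).trans_le (Nat.pow_le_pow_right two_pos (by omega))
  have h₂ : 2 ≤ 2 ^ (n - (k + 1)) := Nat.le_self_pow (by omega) 2
  have h₃ : 2 ^ (k + 1) ≤ 2 ^ 2 ^ (n - (k + 1)) := Nat.pow_le_pow_right two_pos h₁
  have h₄ : 2 ^ 2 ≤ 2 ^ 2 ^ (n - (k + 1)) := Nat.pow_le_pow_right two_pos h₂
  have : 1 ≤ 2 ^ k := Nat.one_le_two_pow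
  simp only [cpTerm, pow_succ] at h₃ h₄ ⊢
  omega

theorem two_pow_sub_le_cpTerm {n k : ℕ} (h : n - k ≤ k) : 2 ^ (n - k) ≤ cpTerm n k := by
  have : 2 ^ (n - k + 1) ≤ 2 ^ 2 ^ (n - k) := Nat.pow_le_pow_right two_pos Nat.lt_two_pow_self
  rw [pow_succ] at this
  exact le_min (Nat.pow_le_pow_right two_pos h) (by omega)

theorem cpTerm_eq_two_pow_of_lt {n k i : ℕ} (hk : 1 ≤ k → cpTerm n (k - 1) < cpTerm n k)
    (hi : i < k) : cpTerm n i = 2 ^ i :=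
  cpTerm_eq_two_pow_of_le (j := k - 1) (by omega) <| cpTerm_eq_two_pow_of_lt_succ <| by
    rw [Nat.sub_add_cancel (by omega)]
    exact hk (by omega)

theorem exists_unit_nfa_of_length_le_one (F : Set (List Bool)) {n : ℕ} (hn : n ≤ 1) :
    ∃ M : NFA Bool Unit, ∀ x : List Bool, x.length = n → (x ∈ M.accepts ↔ x ∈ F) := by
  interval_cases n
  · refine ⟨⟨fun _ _ => ∅, {_u | [] ∈ F}, Set.univ⟩, fun x hx => ?_⟩
    obtain rfl := List.eq_nil_of_length_eq_zero hx
    simp [NFA.mem_accepts]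
  · refine ⟨⟨fun _ c => {_u | [c] ∈ F}, Set.univ, Set.univ⟩, fun x hx => ?_⟩
    obtain ⟨c, rfl⟩ := List.length_eq_one_iff.1 hx
    simp [NFA.mem_accepts, NFA.stepSet]

namespace ChamparnaudPin

variable (F : Set (List Bool)) (k m : ℕ)

abbrev State := (Σ i : Fin k, List.Vector Bool i) ⊕ List.Vector Bool m

def machine (hk : 0 < k) : NFA Bool (State k m) where
  step
    | .inl ⟨i, u⟩, c =>
      if h : i.1 + 1 < k then {.inl ⟨⟨i.1 + 1, h⟩, ⟨u.1 ++ [c], by simp⟩⟩}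
      else .inr '' {w | u.1 ++ c :: w.1 ∈ F}
    | .inr w, c => .inr '' {w' | w.1 = c :: w'.1.dropLast}
  start := {.inl ⟨⟨0, hk⟩, List.Vector.nil⟩}
  accept := Set.univ

variable {F k m}

theorem card_state : Fintype.card (State k m) = ∑ i : Fin k, 2 ^ (i : ℕ) + 2 ^ m := by
  simp [State, Fintype.card_sum, Fintype.card_sigma, card_vector]

theorem machine_step_inl (hk : 0 < k) (i : Fin k) (u : List.Vector Bool i) (c : Bool) :
    (machine F k m hk).step (.inl ⟨i, u⟩) c =
      if h : i.1 + 1 < k then {.inl ⟨⟨i.1 + 1, h⟩, ⟨u.1 ++ [c], by simp⟩⟩}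
      else .inr '' {w | u.1 ++ c :: w.1 ∈ F} := rfl

theorem machine_step_inr (hk : 0 < k) (w : List.Vector Bool m) (c : Bool) :
    (machine F k m hk).step (.inr w) c = .inr '' {w' | w.1 = c :: w'.1.dropLast} := rfl

theorem evalFrom_inl (hk : 0 < k) (i : Fin k) (u : List.Vector Bool i) (y : List Bool)
    (hy : i + y.length = k) :
    (machine F k m hk).evalFrom {.inl ⟨i, u⟩} y = .inr '' {w | u.1 ++ y ++ w.1 ∈ F} := by
  induction y generalizing i with
  | nil => simp at hy; omega
  | cons c y ih =>
    rw [NFA.evalFrom_cons, NFA.stepSet_singleton, machine_step_inl]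
    by_cases h : i.1 + 1 < k
    · rw [dif_pos h]
      exact (ih ⟨i.1 + 1, h⟩ _ (by simp at hy ⊢; omega)).trans (by simp)
    · obtain rfl : y = [] := List.eq_nil_of_length_eq_zero (by simp at hy; omega)
      simp [dif_neg h]

theorem evalFrom_inr_nonempty_iff (hk : 0 < k) (w : List.Vector Bool m) (v : List Bool)
    (hv : v.length ≤ m) :
    ((machine F k m hk).evalFrom {.inr w} v).Nonempty ↔ v <+: w.1 := by
  induction v generalizing w with
  | nil => simp
  | cons c v ih =>
    rw [NFA.evalFrom_cons, NFA.stepSet_singleton, NFA.evalFrom_nonempty_iff,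
      List.cons_prefix_iff_exists_dropLast (by simp at hv ⊢; omega), machine_step_inr]
    simp only [Set.exists_mem_image]
    constructor
    · rintro ⟨w', hw', hne⟩
      exact ⟨w'.1, by simp, hw', (ih w' (by simp at hv; omega)).1 hne⟩
    · rintro ⟨w', hlen, hw', hpre⟩
      exact ⟨⟨w', by simpa using hlen⟩, hw', (ih _ (by simp at hv; omega)).2 hpre⟩

theorem append_mem_accepts_iff (hk : 0 < k) (u v : List Bool) (hu : u.length = k)
    (hv : v.length = m) : u ++ v ∈ (machine F k m hk).accepts ↔ u ++ v ∈ F := by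
  have hstart : (machine F k m hk).start = {.inl ⟨⟨0, hk⟩, List.Vector.nil⟩} := rfl
  have haccept : (machine F k m hk).accept = Set.univ := rfl
  rw [NFA.mem_accepts, NFA.evalFrom_append, hstart, haccept,
    evalFrom_inl hk _ _ _ (by simpa using hu)]
  simp only [Set.mem_univ, true_and]
  rw [← Set.nonempty_def, NFA.evalFrom_nonempty_iff]
  simp only [Set.exists_mem_image, Set.mem_ofPred_eq]
  constructor
  · rintro ⟨w, hw, hne⟩
    rw [evalFrom_inr_nonempty_iff hk w v hv.le] at hne
    rwa [hne.eq_of_length (by simp [hv])]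
  · intro h
    exact ⟨⟨v, hv⟩, h, (evalFrom_inr_nonempty_iff hk _ v hv.le).2 (List.prefix_refl v)⟩

theorem card_state_le_sum_cpTerm {n : ℕ} (hk : 1 ≤ k → cpTerm n (k - 1) < cpTerm n k)
    (hm : n - k ≤ k) :
    Fintype.card (State k (n - k)) ≤ ∑ i ∈ Finset.range (k + 1), cpTerm n i := by
  rw [card_state, Finset.sum_range_succ, Fin.sum_univ_eq_sum_range (fun i => 2 ^ i),
    Finset.sum_congr rfl fun i hi => cpTerm_eq_two_pow_of_lt hk (Finset.mem_range.1 hi)]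
  exact Nat.add_le_add_left (two_pow_sub_le_cpTerm hm) _

end ChamparnaudPin

open ChamparnaudPin in
theorem main_theorem_general (n k : ℕ) (hkn : k ≤ n)
    (hk : 1 ≤ k → cpTerm n (k - 1) < cpTerm n k)
    (hk' : ∀ j, k < j → j ≤ n → ¬ cpTerm n (j - 1) < cpTerm n j)
    (F : Set (List Bool)) :
    ∃ M : NFA Bool (Fin (∑ i ∈ Finset.range (k + 1), cpTerm n i)),
      ∀ x : List Bool, x.length = n → (x ∈ M.accepts ↔ x ∈ F) := by
  have hsplit : n - k ≤ k ∨ n - k ≤ 1 := by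
    by_contra! h
    exact hk' (k + 1) (by omega) (by omega) (cpTerm_lt_cpTerm_succ h.1 h.2)
  rcases Nat.eq_zero_or_pos k with rfl | hk0
  · obtain ⟨M, hM⟩ := exists_unit_nfa_of_length_le_one F (n := n) (by omega)
    obtain ⟨M', hM'⟩ := M.exists_fin_accepts_eq_of_card_le (N := ∑ i ∈ Finset.range 1, cpTerm n i)
      (by simp [cpTerm_zero])
    exact ⟨M', fun x hx => hM' ▸ hM x hx⟩
  · obtain ⟨M', hM'⟩ := (machine F k (n - k) hk0).exists_fin_accepts_eq_of_card_le
      (card_state_le_sum_cpTerm hk (by omega))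
    refine ⟨M', fun x hx => ?_⟩
    rw [hM', ← List.take_append_drop k x]
    exact append_mem_accepts_iff hk0 _ _ (by simp [hx, hkn]) (by simp [hx])

/-- Main theorem: for every F ⊆ {0,1}^n, the length-restricted nondeterministic state
complexity of F is at most ∑_{i=0}^k a_i where k is the greatest index with a_{k−1} < a_k. -/
theorem main_theorem (n k : ℕ) (hkn : k ≤ n)
    (hk : 1 ≤ k → cpTerm n (k - 1) < cpTerm n k)
    (hk' : ∀ j, k < j → j ≤ n → ¬ cpTerm n (j - 1) < cpTerm n j)
    (F : Set (List Bool)) (hF : ∀ x ∈ F, x.length = n) :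
    ∃ M : NFA Bool (Fin (∑ i ∈ Finset.range (k + 1), cpTerm n i)),
      ∀ x : List Bool, x.length = n → (x ∈ M.accepts ↔ x ∈ F) :=
  main_theorem_general n k hkn hk hk' F
end

section
/- For every F ⊆ {0,1}⁴ such that no word in F begins with 11, there is an NFA with at most 6 states whose accepted words of length 4 are exactly F; hence 6-state NFAs shatter a set of 12 binary words of length 4. -/
/-!
The first two letters are read deterministically along a binary tree `0 → {1, 2} → {3, 4, 5}`
whose leaves `3, 4, 5` record the prefixes `00, 01, 10`; the prefix `11` dies at state `2`.
The leaves `4` and `5` double as the states from which the last letter `0`, resp. `1`, returns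
to the accepting start state `0`, and a leaf with prefix `p` moves on the letter `c` to the
state for the last letter `d` exactly when `p c d ∈ F`. Accepting runs of length 4 pass through
the layers `{0}, {1, 2}, {3, 4, 5}, {4, 5}, {0}`, so the double use of `4` and `5` creates no
spurious words.
-/

namespace ShatteringNFA

def suffixState (d : Bool) : Fin 6 := if d then 5 else 4

def twoLetterPrefix : Fin 6 → List Bool
  | 3 => [false, false]
  | 4 => [false, true]
  | 5 => [true, false]
  | _ => []

end ShatteringNFA

open ShatteringNFA

def shatteringNFA (F : Set (List Bool)) : NFA Bool (Fin 6) where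
  start := {0}
  accept := {0}
  step q c := match q with
    | 0 => {if c then 2 else 1}
    | 1 => {if c then 4 else 3}
    | 2 => if c then ∅ else {5}
    | q => {s | ∃ d, s = suffixState d ∧ twoLetterPrefix q ++ [c, d] ∈ F} ∪
        {s | s = 0 ∧ q = suffixState c}

namespace ShatteringNFA

variable {F : Set (List Bool)}

theorem mem_accepts_iff {x : List Bool} :
    x ∈ (shatteringNFA F).accepts ↔ 0 ∈ (shatteringNFA F).evalFrom {0} x := by
  simp [NFA.mem_accepts, shatteringNFA]

theorem mem_evalFrom_start_iff {q : Fin 6} {a b : Bool} :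
    q ∈ (shatteringNFA F).evalFrom {0} [a, b] ↔ twoLetterPrefix q = [a, b] := by
  fin_cases q <;> cases a <;> cases b <;> simp [shatteringNFA, twoLetterPrefix]

theorem zero_mem_step_iff {t : Fin 6} {d : Bool} :
    0 ∈ (shatteringNFA F).step t d ↔ t = suffixState d := by
  fin_cases t <;> cases d <;> simp [shatteringNFA, suffixState]

theorem suffixState_mem_step_iff {q : Fin 6} {a b c d : Bool} (hq : twoLetterPrefix q = [a, b]) :
    suffixState d ∈ (shatteringNFA F).step q c ↔ [a, b, c, d] ∈ F := by
  fin_cases q <;> cases c <;> cases d <;> simp_all [shatteringNFA, suffixState, twoLetterPrefix]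

theorem zero_mem_evalFrom_iff {q : Fin 6} {a b c d : Bool} (hq : twoLetterPrefix q = [a, b]) :
    0 ∈ (shatteringNFA F).evalFrom {q} [c, d] ↔ [a, b, c, d] ∈ F := by
  simp only [NFA.evalFrom_cons, NFA.evalFrom_nil, NFA.stepSet_singleton, NFA.mem_stepSet,
    zero_mem_step_iff, exists_eq_right, suffixState_mem_step_iff hq]

theorem exists_twoLetterPrefix_eq {a b : Bool} (h : [a, b] ≠ [true, true]) :
    ∃ q, twoLetterPrefix q = [a, b] := by
  revert h
  cases a <;> cases b <;> decide

end ShatteringNFA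

/-- If no word of F ⊆ {0,1}⁴ begins with 11, then F is the set of length-4 words of
some NFA with 6 states. -/
theorem six_states_avoiding_prefix (F : Set (List Bool))
    (hF : ∀ x ∈ F, x.length = 4 ∧ x.take 2 ≠ [true, true]) :
    ∃ M : NFA Bool (Fin 6), ∀ x : List Bool, x.length = 4 → (x ∈ M.accepts ↔ x ∈ F) := by
  refine ⟨shatteringNFA F, fun x hx => ?_⟩
  obtain ⟨a, b, c, d, rfl⟩ := List.length_eq_four.mp hx
  rw [mem_accepts_iff, show [a, b, c, d] = [a, b] ++ [c, d] from rfl, NFA.evalFrom_append,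
    NFA.mem_evalFrom_iff_exists]
  simp only [mem_evalFrom_start_iff]
  constructor
  · rintro ⟨q, hq, h⟩
    exact (zero_mem_evalFrom_iff hq).mp h
  · intro h
    obtain ⟨q, hq⟩ := exists_twoLetterPrefix_eq (hF _ h).2
    exact ⟨q, hq, (zero_mem_evalFrom_iff hq).mpr h⟩
end
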